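/- arXiv:0909.4925 — 3 statements merged into one kernel-verified Lean document; each statement's English description precedes it below -/
import Mathlib

section
/- Let χ be a Dirichlet character modulo q and r ≥ 1 an integer. For every s ∈ ℂ with Re(s) > 1, the (r−1)-st iterated derivative at s of the function s ↦ log L^{(r)}(s;χ) = ∑_p (log p)^{1−r} Li_r(χ(p) p^{−s}) equals (−1)^{r−1} · ∑_p Li_1(χ(p) p^{−s}), where Li_1(w) = −log(1−w) with the principal logarithm. -/
open Complex Filter Topology
open scoped Classical

/-- The multiplicity (order of vanishing) of `f` at `ρ`. -/
noncomputable def zeroMult (f : ℂ → ℂ) (ρ : ℂ) : ℕ :=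
  if h : AnalyticAt ℂ f ρ then (analyticOrderAt f ρ).toNat else 0

/-- The polylogarithm `Li_r(w) = ∑_{m≥1} w^m / m^r`. -/
noncomputable def Li (r : ℕ) (w : ℂ) : ℂ :=
  ∑' m : ℕ, w ^ (m + 1) / ((m + 1 : ℕ) : ℂ) ^ r

/-- `log L^{(r)}(s;χ) = ∑_p (log p)^{1-r} Li_r(χ(p) p^{-s})`. -/
noncomputable def logPolyL {q : ℕ} (χ : DirichletCharacter ℂ q) (r : ℕ) (s : ℂ) : ℂ :=
  ∑' p : Nat.Primes,
    (Real.log (p : ℕ) : ℂ) ^ (1 - (r : ℤ)) * Li r (χ ((p : ℕ) : ZMod q) * ((p : ℕ) : ℂ) ^ (-s))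

/-!
Expanding `Li_r` and using `(p^{-s})^k = (p^k)^{-s}`, `log L^{(r)}(s;χ)` is, for `Re s > 1`, the
Dirichlet series with coefficients `χ(n) Λ(n) / (log n)^r`, which are bounded for `r ≥ 1`.
Differentiating a Dirichlet series multiplies its coefficients by `-log n`, i.e. lowers `r` by one,
so `r - 1` derivatives leave `(-1)^{r-1} log L^{(1)}(s;χ)`.
-/

open ArithmeticFunction LSeries

/-- At `n = p^k` this is `χ(p)^k (log p)^{1-r} / k^r`, the coefficient of `p^{-ks}` in
`log L^{(r)}(s;χ)`. -/
noncomputable def logPolyLCoeff {q : ℕ} (χ : DirichletCharacter ℂ q) (r n : ℕ) : ℂ :=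
  χ n * Λ n / Complex.log n ^ r

section logPolyLCoeff

variable {q : ℕ} (χ : DirichletCharacter ℂ q)

lemma logMul_logPolyLCoeff_succ (r : ℕ) :
    logMul (logPolyLCoeff χ (r + 1)) = logPolyLCoeff χ r := by
  ext n
  by_cases hΛ : Λ n = 0
  · simp [logPolyLCoeff, hΛ]
  have hlog : Complex.log n ≠ 0 := by
    rw [← natCast_log, ofReal_ne_zero]
    exact (Real.log_pos (by exact_mod_cast (vonMangoldt_ne_zero_iff.mp hΛ).one_lt)).ne'
  simp only [logMul, logPolyLCoeff]
  field_simp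
  ring

lemma iterate_logMul_logPolyLCoeff (r n : ℕ) :
    logMul^[n] (logPolyLCoeff χ (r + n)) = logPolyLCoeff χ r := by
  induction n generalizing r with
  | zero => rfl
  | succ n ih => rw [Function.iterate_succ_apply, ← add_assoc, logMul_logPolyLCoeff_succ, ih]

lemma norm_logPolyLCoeff_le {r : ℕ} (hr : 1 ≤ r) (n : ℕ) :
    ‖logPolyLCoeff χ r n‖ ≤ (Real.log 2)⁻¹ ^ (r - 1) := by
  by_cases hΛ : Λ n = 0
  · simp only [logPolyLCoeff, hΛ, ofReal_zero, mul_zero, zero_div, norm_zero]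
    positivity
  have hlog2 : Real.log 2 ≤ Real.log n :=
    Real.log_le_log two_pos (by exact_mod_cast (vonMangoldt_ne_zero_iff.mp hΛ).two_le)
  have hlog2_pos : 0 < Real.log 2 := Real.log_pos one_lt_two
  obtain ⟨k, rfl⟩ : ∃ k, r = k + 1 := ⟨r - 1, by omega⟩
  calc ‖logPolyLCoeff χ (k + 1) n‖ = ‖χ n‖ * (Λ n / Real.log n) / Real.log n ^ k := by
        rw [logPolyLCoeff, ← natCast_log, norm_div, norm_mul, norm_pow, norm_real, norm_real,
          Real.norm_of_nonneg vonMangoldt_nonneg, Real.norm_of_nonneg (by linarith)]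
        ring
    _ ≤ 1 * 1 / Real.log 2 ^ k := by
        gcongr
        · exact DirichletCharacter.norm_le_one χ _
        · exact div_le_one_of_le₀ vonMangoldt_le_log (by linarith)
    _ = (Real.log 2)⁻¹ ^ (k + 1 - 1) := by simp

lemma abscissaOfAbsConv_logPolyLCoeff_le {r : ℕ} (hr : 1 ≤ r) :
    abscissaOfAbsConv (logPolyLCoeff χ r) ≤ 1 :=
  abscissaOfAbsConv_le_of_le_const ⟨_, fun n _ ↦ norm_logPolyLCoeff_le χ hr n⟩

lemma term_logPolyLCoeff_prime_pow (r : ℕ) (s : ℂ) (p : Nat.Primes) (k : ℕ) :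
    term (logPolyLCoeff χ r) s (p ^ (k + 1)) =
      (Real.log (p : ℕ) : ℂ) ^ (1 - (r : ℤ)) *
        ((χ ((p : ℕ) : ZMod q) * ((p : ℕ) : ℂ) ^ (-s)) ^ (k + 1) / ((k + 1 : ℕ) : ℂ) ^ r) := by
  have hp := p.prop
  have hL : (Real.log p : ℂ) ≠ 0 :=
    ofReal_ne_zero.mpr (Real.log_pos (by exact_mod_cast hp.one_lt)).ne'
  have hcpow : (((p ^ (k + 1) : ℕ)) : ℂ) ^ (-s) = (((p : ℕ) : ℂ) ^ (-s)) ^ (k + 1) := by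
    rw [Nat.cast_pow, ← natCast_cpow_natCast_mul, cpow_nat_mul]
  rw [term_of_ne_zero (pow_ne_zero _ hp.ne_zero), div_eq_mul_inv, ← cpow_neg, hcpow,
    logPolyLCoeff, ← natCast_log, Nat.cast_pow (α := ℝ), Real.log_pow,
    vonMangoldt_apply_pow k.succ_ne_zero, vonMangoldt_apply_prime hp, Nat.cast_pow (α := ZMod q),
    map_pow, zpow_sub₀ hL, zpow_one, zpow_natCast]
  push_cast at hL ⊢
  rw [mul_pow]
  field_simp
  ring

lemma logPolyL_eq_LSeries {r : ℕ} (hr : 1 ≤ r) {s : ℂ} (hs : 1 < s.re) :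
    logPolyL χ r s = LSeries (logPolyLCoeff χ r) s := by
  have hsum : LSeriesSummable (logPolyLCoeff χ r) s :=
    LSeriesSummable_of_abscissaOfAbsConv_lt_re <|
      (abscissaOfAbsConv_logPolyLCoeff_le χ hr).trans_lt (by exact_mod_cast hs)
  have hsupp : Function.support (term (logPolyLCoeff χ r) s) ⊆ {n | IsPrimePow n} := by
    intro n hn
    refine vonMangoldt_ne_zero_iff.mp fun hΛ ↦ hn ?_
    simp [term_def, logPolyLCoeff, hΛ]
  rw [LSeries, tsum_eq_tsum_primes_of_support_subset_prime_powers hsum hsupp, logPolyL]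
  refine tsum_congr fun p ↦ ?_
  simp only [term_logPolyLCoeff_prime_pow, tsum_mul_left, Li]

lemma logPolyL_one (s : ℂ) :
    logPolyL χ 1 s = ∑' p : Nat.Primes, Li 1 (χ ((p : ℕ) : ZMod q) * ((p : ℕ) : ℂ) ^ (-s)) := by
  simp [logPolyL]

end logPolyLCoeff

theorem iterated_deriv_logPolyL {q : ℕ} (χ : DirichletCharacter ℂ q)
    (r : ℕ) (hr : 1 ≤ r) (s : ℂ) (hs : 1 < s.re) :
    iteratedDeriv (r - 1) (fun w : ℂ => logPolyL χ r w) s =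
      (-1 : ℂ) ^ (r - 1) *
        ∑' p : Nat.Primes, Li 1 (χ ((p : ℕ) : ZMod q) * ((p : ℕ) : ℂ) ^ (-s)) := by
  obtain ⟨n, rfl⟩ : ∃ n, r = 1 + n := ⟨r - 1, by omega⟩
  have hLSeries : (fun w ↦ logPolyL χ (1 + n) w) =ᶠ[𝓝 s] LSeries (logPolyLCoeff χ (1 + n)) :=
    (isOpen_lt continuous_const continuous_re).eventually_mem hs |>.mono
      fun w hw ↦ logPolyL_eq_LSeries χ (by omega) hw
  have habs : abscissaOfAbsConv (logPolyLCoeff χ (1 + n)) < s.re :=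
    (abscissaOfAbsConv_logPolyLCoeff_le χ (by omega)).trans_lt (by exact_mod_cast hs)
  rw [Nat.add_sub_cancel_left, hLSeries.iteratedDeriv_eq, LSeries_iteratedDeriv n habs,
    iterate_logMul_logPolyLCoeff, ← logPolyL_eq_LSeries χ le_rfl hs, logPolyL_one]
end

section
/- Let χ be a Dirichlet character modulo q, let r ≥ 1 be an integer and z ∈ ℂ with Re(z) > 1. Then ∫_0^∞ (L′(z+x,χ)/L(z+x,χ)) · x^{r−1} dx = −(r−1)! · ∑_p (log p)^{1−r} Li_r(χ(p) p^{−z}), where L′ denotes the complex derivative of the Dirichlet L-function L(·,χ), the integral is over x ∈ (0,∞), and the sum runs over all rational primes p. -/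
open Complex Filter Topology
open scoped Classical

/-!
For `Re s > 1`, `-L'/L(s, χ)` is the Dirichlet series `∑ χ(n) Λ(n) n^{-s}`. Along the ray `s = z + x`
its `n`-th term is `χ(n) Λ(n) n^{-z} e^{-x log n}`, whose integral against `x^{r-1}` is
`(r-1)! χ(n) Λ(n) n^{-z} (log n)^{-r}`; the terms are absolutely integrable with summable integrals,
so integral and sum may be swapped. Since `Λ(p^m) = log p` and `log p^m = m log p`, regrouping the
resulting series over prime powers `p^m` gives `(r-1)! ∑_p (log p)^{1-r} Li_r(χ(p) p^{-z})`.
-/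

open MeasureTheory Set
open scoped LSeries.notation ArithmeticFunction.vonMangoldt

namespace LSeries

lemma term_add_ofReal (f : ℕ → ℂ) (z : ℂ) (x : ℝ) (n : ℕ) :
    term f (z + x) n = term f z n * (Real.exp (-Real.log n * x) : ℂ) := by
  rcases eq_or_ne n 0 with rfl | hn
  · simp
  have hpow : (n : ℂ) ^ (x : ℂ) = (Real.exp (Real.log n * x) : ℂ) := by
    rw [← ofReal_natCast, ← ofReal_cpow n.cast_nonneg,
      Real.rpow_def_of_pos (Nat.cast_pos.mpr (Nat.pos_of_ne_zero hn))]
  rw [term_of_ne_zero hn, term_of_ne_zero hn, cpow_add _ _ (Nat.cast_ne_zero.mpr hn), hpow,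
    neg_mul, Real.exp_neg, ofReal_inv]
  ring

lemma term_of_le_one {f : ℕ → ℂ} (hf : f 1 = 0) (s : ℂ) {n : ℕ} (hn : n ≤ 1) :
    term f s n = 0 := by
  interval_cases n <;> simp [hf]

end LSeries

open LSeries (term term_of_le_one)

section MellinShift

variable {f : ℕ → ℂ} {z : ℂ}

lemma LSeriesSummable.summable_norm_term_div_log_rpow (hf : LSeriesSummable f z)
    (hf1 : f 1 = 0) {σ : ℝ} (hσ : 0 ≤ σ) :
    Summable fun n : ℕ ↦ ‖term f z n‖ / Real.log n ^ σ := by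
  refine .of_nonneg_of_le (fun n ↦ by positivity) (fun n ↦ ?_) (hf.norm.div_const (Real.log 2 ^ σ))
  rcases le_or_gt n 1 with hn | hn
  · simp [term_of_le_one hf1 z hn]
  · gcongr
    exact_mod_cast hn

theorem hasSum_mellin_LSeries_comp_add (hf : LSeriesSummable f z) (hf1 : f 1 = 0) {s : ℂ}
    (hs : 0 < s.re) :
    HasSum (fun n : ℕ ↦ Gamma s * term f z n / (Real.log n : ℂ) ^ s)
      (mellin (fun x : ℝ ↦ LSeries f (z + x)) s) := by
  refine hasSum_mellin (fun n ↦ ?_) hs (fun x hx ↦ ?_)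
    (hf.summable_norm_term_div_log_rpow hf1 hs.le)
  · rcases le_or_gt n 1 with hn | hn
    · exact .inl (term_of_le_one hf1 z hn)
    · exact .inr (Real.log_pos (mod_cast hn))
  · have hfx : LSeriesSummable f (z + x) := hf.of_re_le_re (by simpa using le_of_lt hx)
    rw [← funext (LSeries.term_add_ofReal f z x)]
    exact hfx.LSeriesHasSum

theorem integral_LSeries_comp_add_mul_pow (hf : LSeriesSummable f z) (hf1 : f 1 = 0) (k : ℕ) :
    ∫ x in Ioi (0 : ℝ), LSeries f (z + x) * (x : ℂ) ^ k =
      k.factorial * ∑' n : ℕ, term f z n / (Real.log n : ℂ) ^ (k + 1) := by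
  have h := hasSum_mellin_LSeries_comp_add hf hf1 (s := k + 1) (by simp; positivity)
  simp only [mellin, add_sub_cancel_right, Gamma_nat_eq_factorial, smul_eq_mul, mul_div_assoc]
    at h
  simp only [cpow_natCast, ← Nat.cast_succ, Nat.succ_eq_add_one] at h
  rw [← tsum_mul_left, h.tsum_eq]
  exact setIntegral_congr_fun measurableSet_Ioi fun x _ ↦ mul_comm _ _

end MellinShift

namespace DirichletCharacter

variable {N : ℕ} (χ : DirichletCharacter ℂ N)

lemma deriv_LFunction_div_LFunction [NeZero N] {s : ℂ} (hs : 1 < s.re) :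
    deriv (LFunction χ) s / LFunction χ s = -LSeries (↗χ * ↗Λ) s := by
  rw [deriv_LFunction_eq_deriv_LSeries χ hs, LFunction_eq_LSeries χ hs,
    LSeries_twist_vonMangoldt_eq χ hs, neg_div, neg_neg]

lemma term_twist_vonMangoldt_prime_pow_div_log_pow {p : ℕ} (hp : p.Prime) (z : ℂ) (j k : ℕ) :
    term (↗χ * ↗Λ) z (p ^ (j + 1)) / (Real.log (p ^ (j + 1) : ℕ) : ℂ) ^ (k + 1) =
      (Real.log p : ℂ) ^ (1 - ((k + 1 : ℕ) : ℤ)) *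
        ((χ p * (p : ℂ) ^ (-z)) ^ (j + 1) / ((j + 1 : ℕ) : ℂ) ^ (k + 1)) := by
  have hlog : (Real.log p : ℂ) ≠ 0 := ofReal_ne_zero.mpr (Real.log_pos (mod_cast hp.one_lt)).ne'
  rw [LSeries.term_of_ne_zero (pow_ne_zero _ hp.ne_zero), Pi.mul_apply,
    ArithmeticFunction.vonMangoldt_apply_pow j.succ_ne_zero,
    ArithmeticFunction.vonMangoldt_apply_prime hp, Nat.cast_pow, map_pow, Nat.cast_pow,
    ← natCast_cpow_natCast_mul, cpow_nat_mul, Nat.cast_pow, Real.log_pow, cpow_neg,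
    zpow_sub₀ hlog, zpow_one, zpow_natCast, ofReal_mul, ofReal_natCast, mul_pow]
  ring

lemma support_term_twist_vonMangoldt_div_log_pow_subset (z : ℂ) (k : ℕ) :
    Function.support (fun n ↦ term (↗χ * ↗Λ) z n / (Real.log n : ℂ) ^ (k + 1)) ⊆
      {n | IsPrimePow n} :=
  Function.support_subset_iff'.mpr fun n hn ↦ by
    simp [LSeries.term_def, ArithmeticFunction.vonMangoldt_eq_zero_iff.mpr hn]

lemma tsum_term_twist_vonMangoldt_div_log_pow {z : ℂ} (hz : 1 < z.re) (k : ℕ) :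
    ∑' n : ℕ, term (↗χ * ↗Λ) z n / (Real.log n : ℂ) ^ (k + 1) = logPolyL χ (k + 1) z := by
  have hsum : Summable fun n : ℕ ↦ term (↗χ * ↗Λ) z n / (Real.log n : ℂ) ^ (k + 1) := by
    refine .of_norm <| ((χ.LSeriesSummable_twist_vonMangoldt hz).summable_norm_term_div_log_rpow
      (by simp) (σ := k + 1) (by positivity)).congr fun n ↦ ?_
    rw [norm_div, norm_pow, norm_real, Real.norm_of_nonneg (Real.log_natCast_nonneg n),
      ← Nat.cast_succ, Real.rpow_natCast]
  rw [tsum_eq_tsum_primes_of_support_subset_prime_powers hsum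
    (χ.support_term_twist_vonMangoldt_div_log_pow_subset z k), logPolyL]
  refine tsum_congr fun p ↦ ?_
  simp_rw [χ.term_twist_vonMangoldt_prime_pow_div_log_pow p.prop, Li, tsum_mul_left]

end DirichletCharacter

theorem integral_logDeriv_LFunction {q : ℕ} [NeZero q] (χ : DirichletCharacter ℂ q)
    (r : ℕ) (hr : 1 ≤ r) (z : ℂ) (hz : 1 < z.re) :
    ∫ x in Set.Ioi (0 : ℝ),
        deriv (DirichletCharacter.LFunction χ) (z + (x : ℂ)) /
            DirichletCharacter.LFunction χ (z + (x : ℂ)) * (x : ℂ) ^ (r - 1) =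
      -(((r - 1).factorial : ℂ) * logPolyL χ r z) := by
  obtain ⟨k, rfl⟩ : ∃ k, r = k + 1 := ⟨r - 1, by omega⟩
  have hlogDeriv : ∀ x ∈ Ioi (0 : ℝ),
      deriv χ.LFunction (z + x) / χ.LFunction (z + x) * (x : ℂ) ^ k =
        -(LSeries (↗χ * ↗Λ) (z + x) * (x : ℂ) ^ k) := fun x hx ↦ by
    have hzx : 1 < (z + x).re := by simpa using hz.trans_le (le_add_of_nonneg_right hx.le)
    rw [χ.deriv_LFunction_div_LFunction hzx, neg_mul]
  rw [Nat.add_sub_cancel, setIntegral_congr_fun measurableSet_Ioi hlogDeriv, integral_neg,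
    integral_LSeries_comp_add_mul_pow (χ.LSeriesSummable_twist_vonMangoldt hz) (by simp),
    χ.tsum_term_twist_vonMangoldt_div_log_pow hz]
end

section
/- Let χ be a Dirichlet character modulo q, let r ≥ 1 be an integer and s ∈ ℂ with Re(s) > 1. Then the family over rational primes p of the numbers (log p)^{1−r} Li_r(χ(p) p^{−s}) is absolutely summable; consequently the infinite product defining the depth-r poly-L-function L^{(r)}(s;χ) = ∏_p exp((log p)^{1−r} Li_r(χ(p) p^{−s})) converges absolutely for Re(s) > 1. -/
open Complex Filter Topology
open scoped Classical

/-!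
For `‖w‖ ≤ 1/2` the polylogarithm is dominated by a geometric series, so `‖Li_r(w)‖ ≤ 2‖w‖`.
At a prime `p` we have `‖χ(p) p^{-s}‖ ≤ p^{-σ} ≤ 1/2` with `σ = Re s`, and for `r ≥ 1` the factor
`(log p)^{1-r}` is at most `(log 2)^{1-r}`; hence the `p`-th term is `O(p^{-σ})`, which is summable
over the primes. Exponentiating an absolutely convergent sum gives a convergent product.
-/

theorem norm_Li_le {r : ℕ} {w : ℂ} (hw : ‖w‖ < 1) : ‖Li r w‖ ≤ ‖w‖ * (1 - ‖w‖)⁻¹ := by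
  refine tsum_of_norm_bounded ((hasSum_geometric_of_lt_one (norm_nonneg w) hw).mul_left ‖w‖)
    fun m ↦ ?_
  have hden : (1 : ℝ) ≤ ‖((m + 1 : ℕ) : ℂ) ^ r‖ := by
    rw [norm_pow, Complex.norm_natCast]
    exact one_le_pow₀ (by norm_cast; omega)
  rw [norm_div, norm_pow, ← pow_succ']
  exact div_le_self (by positivity) hden

theorem norm_Li_le_two_mul {r : ℕ} {w : ℂ} (hw : ‖w‖ ≤ 1 / 2) : ‖Li r w‖ ≤ 2 * ‖w‖ := by
  calc ‖Li r w‖ ≤ ‖w‖ * (1 - ‖w‖)⁻¹ := norm_Li_le (by linarith)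
    _ ≤ ‖w‖ * 2 := by
      gcongr
      rw [inv_le_comm₀ (by linarith) two_pos]
      linarith
    _ = 2 * ‖w‖ := mul_comm _ _

theorem zpow_le_zpow_left_of_nonpos {α : Type*} [Field α] [LinearOrder α] [IsStrictOrderedRing α]
    {a b : α} {n : ℤ} (hn : n ≤ 0) (ha : 0 < a) (hab : a ≤ b) : b ^ n ≤ a ^ n := by
  rw [← neg_neg n, zpow_neg b, zpow_neg a]
  exact inv_anti₀ (zpow_pos ha _) (zpow_le_zpow_left₀ (neg_nonneg.mpr hn) ha.le hab)

theorem norm_polyL_term_le {q : ℕ} (χ : DirichletCharacter ℂ q) {r : ℕ} (hr : 1 ≤ r) {s : ℂ}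
    (hs : 1 < s.re) (p : Nat.Primes) :
    ‖(Real.log (p : ℕ) : ℂ) ^ (1 - (r : ℤ)) * Li r (χ ((p : ℕ) : ZMod q) * ((p : ℕ) : ℂ) ^ (-s))‖
      ≤ Real.log 2 ^ (1 - (r : ℤ)) * (2 * ((p : ℕ) : ℝ) ^ (-s.re)) := by
  have hw : ‖χ ((p : ℕ) : ZMod q) * ((p : ℕ) : ℂ) ^ (-s)‖ ≤ ‖((p : ℕ) : ℂ) ^ (-s)‖ :=
    (norm_mul_le _ _).trans (mul_le_of_le_one_left (norm_nonneg _) (χ.norm_le_one _))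
  have hcpow : ‖((p : ℕ) : ℂ) ^ (-s)‖ = ((p : ℕ) : ℝ) ^ (-s.re) := by
    rw [norm_natCast_cpow_of_pos p.prop.pos, neg_re]
  have hlog : Real.log 2 ≤ Real.log (p : ℕ) :=
    Real.log_le_log two_pos (by exact_mod_cast p.prop.two_le)
  have hlog2 : 0 < Real.log 2 := Real.log_pos one_lt_two
  have hlog_factor : ‖(Real.log (p : ℕ) : ℂ) ^ (1 - (r : ℤ))‖ ≤ Real.log 2 ^ (1 - (r : ℤ)) := by
    rw [norm_zpow, Complex.norm_real, Real.norm_of_nonneg (hlog2.trans_le hlog).le]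
    exact zpow_le_zpow_left_of_nonpos (by omega) hlog2 hlog
  rw [norm_mul]
  gcongr
  calc _ ≤ 2 * ‖χ ((p : ℕ) : ZMod q) * ((p : ℕ) : ℂ) ^ (-s)‖ :=
        norm_Li_le_two_mul (hw.trans (norm_prime_cpow_le_one_half p hs))
    _ ≤ 2 * ((p : ℕ) : ℝ) ^ (-s.re) := by rw [← hcpow]; gcongr

theorem polyL_summable_multipliable {q : ℕ} (χ : DirichletCharacter ℂ q)
    (r : ℕ) (hr : 1 ≤ r) (s : ℂ) (hs : 1 < s.re) :
    Summable (fun p : Nat.Primes =>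
      ‖(Real.log (p : ℕ) : ℂ) ^ (1 - (r : ℤ)) *
        Li r (χ ((p : ℕ) : ZMod q) * ((p : ℕ) : ℂ) ^ (-s))‖) ∧
    Multipliable (fun p : Nat.Primes =>
      Complex.exp ((Real.log (p : ℕ) : ℂ) ^ (1 - (r : ℤ)) *
        Li r (χ ((p : ℕ) : ZMod q) * ((p : ℕ) : ℂ) ^ (-s)))) := by
  have hmajorant : Summable fun p : Nat.Primes ↦
      Real.log 2 ^ (1 - (r : ℤ)) * (2 * ((p : ℕ) : ℝ) ^ (-s.re)) :=
    ((Nat.Primes.summable_rpow.mpr (by linarith)).mul_left 2).mul_left _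
  have hsum := hmajorant.of_nonneg_of_le (fun _ ↦ norm_nonneg _) (norm_polyL_term_le χ hr hs)
  exact ⟨hsum, hsum.of_norm.hasSum.cexp.multipliable⟩
end
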